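/- If G and H are finite connected graphs, each with at least two vertices, then the lower monophonic position number of the Cartesian product satisfies mp⁻(G □ H) = 2, i.e. the smallest maximal monophonic position set of G □ H has exactly two vertices. -/

import Mathlib

open SimpleGraph

/-- A walk is *monophonic* if it is an induced path: it is a path and the only
edges of the graph between vertices of the walk are the edges of the walk. -/
def SimpleGraph.Walk.IsMonophonic {V : Type*} {G : SimpleGraph V} {u v : V}
    (p : G.Walk u v) : Prop :=
  p.IsPath ∧ ∀ a b : V, a ∈ p.support → b ∈ p.support → G.Adj a b → p.toSubgraph.Adj a b

/-- A set `S` is a *monophonic position set* if no monophonic path contains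
more than two vertices of `S`. -/
def SimpleGraph.IsMPSet {V : Type*} (G : SimpleGraph V) (S : Set V) : Prop :=
  ∀ ⦃u v : V⦄ (p : G.Walk u v), p.IsMonophonic → ({x ∈ S | x ∈ p.support}).ncard ≤ 2

/-- The *monophonic position number*: the largest cardinality of a monophonic
position set. -/
noncomputable def SimpleGraph.mpNum {V : Type*} (G : SimpleGraph V) : ℕ :=
  sSup {n | ∃ S : Set V, G.IsMPSet S ∧ S.ncard = n}

/-- The *lower monophonic position number*: the smallest cardinality of a maximal
monophonic position set. -/
noncomputable def SimpleGraph.lowerMpNum {V : Type*} (G : SimpleGraph V) : ℕ :=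
  sInf {n | ∃ S : Set V,
    (G.IsMPSet S ∧ ∀ T : Set V, G.IsMPSet T → S ⊆ T → T = S) ∧ S.ncard = n}

/-!
Choose an edge `g₁g₂` of `G` such that `G - g₂` is connected (an end of a spanning tree) and
likewise `h₁h₂` in `H`, and put `x = (g₁, h₁)`, `y = (g₂, h₂)`. Every other vertex `z` lies on a
monophonic path together with `x` and `y`: such a path is built from a row segment followed by a
column segment, which is always induced in `G □ H`, extended by one or two edges near `x` or `y`;
the segments are shortest paths of `G - g₂` and `H - h₂`. Hence `{x, y}` is a maximal monophonic
position set. Conversely every set of at most two vertices is a monophonic position set, so a set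
of at most one vertex is never maximal.
-/

namespace SimpleGraph

section

variable {V V' : Type*} {G : SimpleGraph V} {G' : SimpleGraph V'}

namespace Walk

variable {u v w : V}

theorem isMonophonic_iff {p : G.Walk u v} : p.IsMonophonic ↔ p.IsPath ∧ p.IsChordless := by
  simp only [IsMonophonic, isChordless_iff_forall_mem_edges, ← Subgraph.mem_edgeSet,
    mem_edges_toSubgraph]

theorem IsPath.append {p : G.Walk u v} {q : G.Walk v w} (hp : p.IsPath) (hq : q.IsPath)
    (hpq : ∀ x ∈ p.support, x ∈ q.support → x = v) : (p.append q).IsPath := by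
  have hq' := hq.support_nodup
  rw [← cons_tail_support, List.nodup_cons] at hq'
  rw [isPath_def, support_append, List.nodup_append]
  refine ⟨hp.support_nodup, hq'.2, ?_⟩
  rintro x hx y hy rfl
  obtain rfl := hpq x hx (List.mem_of_mem_tail hy)
  exact hq'.1 hy

theorem IsChordless.append {p : G.Walk u v} {q : G.Walk v w} (hp : p.IsChordless)
    (hq : q.IsChordless) (hpq : ∀ x ∈ p.support, ∀ y ∈ q.support, G.Adj x y → x = v ∨ y = v) :
    (p.append q).IsChordless := by
  have across : ∀ x ∈ p.support, ∀ y ∈ q.support, G.Adj x y → s(x, y) ∈ (p.append q).edges := by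
    intro x hx y hy hxy
    rw [edges_append, List.mem_append]
    rcases hpq x hx y hy hxy with rfl | rfl
    · exact .inr (hq.mem_edges q.start_mem_support hy hxy)
    · exact .inl (hp.mem_edges hx p.end_mem_support hxy)
  rw [isChordless_iff_forall_mem_edges]
  intro x y hx hy hxy
  rw [mem_support_append_iff] at hx hy
  rcases hx with hx | hx <;> rcases hy with hy | hy
  · simp [edges_append, hp.mem_edges hx hy hxy]
  · exact across x hx y hy hxy
  · rw [Sym2.eq_swap]
    exact across y hy x hx hxy.symm
  · simp [edges_append, hq.mem_edges hx hy hxy]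

theorem IsChordless.reverse {p : G.Walk u v} (hp : p.IsChordless) : p.reverse.IsChordless := by
  rw [isChordless_iff_forall_mem_edges]
  intro x y hx hy hxy
  rw [support_reverse, List.mem_reverse] at hx hy
  simpa using hp.mem_edges hx hy hxy

theorem IsChordless.map (f : G ↪g G') {p : G.Walk u v} (hp : p.IsChordless) :
    (p.map f.toHom).IsChordless := by
  rw [isChordless_iff_forall_mem_edges]
  intro x y hx hy hxy
  rw [support_map, List.mem_map] at hx hy
  obtain ⟨x, hx, rfl⟩ := hx
  obtain ⟨y, hy, rfl⟩ := hy
  rw [edges_map]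
  exact List.mem_map_of_mem (hp.mem_edges hx hy (f.map_adj_iff.mp hxy))

theorem isChordless_of_length_eq_dist :
    ∀ {u v : V} (p : G.Walk u v), p.length = G.dist u v → p.IsChordless
  | _, _, nil, _ => by simp [isChordless_iff_forall_mem_edges]
  | u, v, cons (v := w) h q, hp => by
    classical
    obtain ⟨r, hr⟩ := q.reachable.exists_walk_length_eq_dist
    have hq : q.length = G.dist w v := by
      have := dist_le q
      have := dist_le (cons h r)
      simp only [length_cons] at hp this
      omega
    -- a chord from `u` would shortcut the geodesic
    have hu : ∀ x ∈ q.support, G.Adj u x → x = w := by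
      intro x hx hux
      by_contra hxw
      have hsplit := congrArg length (q.take_spec hx)
      have hpos : 0 < (q.takeUntil x hx).length :=
        Nat.pos_of_ne_zero fun h => hxw (eq_of_length_eq_zero h).symm
      have := dist_le (cons hux (q.dropUntil x hx))
      simp only [length_append, length_cons] at hsplit hp this
      omega
    refine h.isChordless_toWalk.append (isChordless_of_length_eq_dist q hq) ?_
    intro x hx y hy hxy
    rw [Adj.support_toWalk, List.mem_cons, List.mem_singleton] at hx
    rcases hx with rfl | rfl
    · exact .inr (hu y hy hxy)
    · exact .inl rfl

theorem _root_.SimpleGraph.Adj.isMonophonic_toWalk (h : G.Adj u v) : h.toWalk.IsMonophonic :=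
  isMonophonic_iff.2 ⟨by simp [h.ne], h.isChordless_toWalk⟩

namespace IsMonophonic

theorem append {p : G.Walk u v} {q : G.Walk v w} (hp : p.IsMonophonic) (hq : q.IsMonophonic)
    (hpq : ∀ x ∈ p.support, x ∈ q.support → x = v)
    (hadj : ∀ x ∈ p.support, ∀ y ∈ q.support, G.Adj x y → x = v ∨ y = v) :
    (p.append q).IsMonophonic := by
  rw [isMonophonic_iff] at *
  exact ⟨hp.1.append hq.1 hpq, hp.2.append hq.2 hadj⟩

theorem reverse {p : G.Walk u v} (hp : p.IsMonophonic) : p.reverse.IsMonophonic := by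
  rw [isMonophonic_iff] at *
  exact ⟨hp.1.reverse, hp.2.reverse⟩

theorem map (f : G ↪g G') {p : G.Walk u v} (hp : p.IsMonophonic) :
    (p.map f.toHom).IsMonophonic := by
  rw [isMonophonic_iff] at *
  exact ⟨hp.1.map f.injective, hp.2.map f⟩

theorem cons {p : G.Walk v w} (hp : p.IsMonophonic) (h : G.Adj u v)
    (hu : u ∉ p.support) (hadj : ∀ x ∈ p.support, G.Adj u x → x = v) :
    (cons h p).IsMonophonic := by
  refine h.isMonophonic_toWalk.append hp ?_ ?_ <;>
    simp only [Adj.support_toWalk, List.mem_cons, List.not_mem_nil, or_false]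
  · rintro x (rfl | rfl) hx
    · exact absurd hx hu
    · rfl
  · rintro x (rfl | rfl) y hy hxy
    · exact .inr (hadj y hy hxy)
    · exact .inl rfl

theorem concat {p : G.Walk u v} (hp : p.IsMonophonic) (h : G.Adj v w)
    (hw : w ∉ p.support) (hadj : ∀ x ∈ p.support, G.Adj x w → x = v) :
    (p.concat h).IsMonophonic := by
  rw [concat_eq_append]
  refine hp.append h.isMonophonic_toWalk ?_ ?_ <;>
    simp only [Adj.support_toWalk, List.mem_cons, List.not_mem_nil, or_false]
  · rintro x hx (rfl | rfl)
    · rfl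
    · exact absurd hx hw
  · rintro x hx y (rfl | rfl) hxy
    · exact .inr rfl
    · exact .inl (hadj x hx hxy)

end IsMonophonic

end Walk

theorem Reachable.exists_isMonophonic {u v : V} (h : G.Reachable u v) :
    ∃ p : G.Walk u v, p.IsMonophonic := by
  obtain ⟨p, hp⟩ := h.exists_walk_length_eq_dist
  exact ⟨p, Walk.isMonophonic_iff.2
    ⟨p.isPath_of_length_eq_dist hp, p.isChordless_of_length_eq_dist hp⟩⟩

theorem Connected.exists_adj_forall_exists_isMonophonic_notMem [Finite V] [Nontrivial V]
    (hG : G.Connected) : ∃ g₁ g₂, G.Adj g₁ g₂ ∧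
      ∀ a, a ≠ g₂ → ∃ p : G.Walk a g₁, p.IsMonophonic ∧ g₂ ∉ p.support := by
  obtain ⟨g₂, hconn⟩ := hG.exists_connected_induce_compl_singleton_of_finite_nontrivial
  obtain ⟨g₁, hg⟩ := hG.preconnected.exists_adj_of_nontrivial g₂
  refine ⟨g₁, g₂, hg.symm, fun a ha => ?_⟩
  obtain ⟨p, hp⟩ :=
    (hconn.preconnected ⟨a, by simpa using ha⟩ ⟨g₁, by simpa using hg.ne'⟩).exists_isMonophonic
  have hg₂ : g₂ ∉ (p.map (Embedding.induce {g₂}ᶜ).toHom).support := by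
    rw [Walk.support_map, List.mem_map]
    rintro ⟨⟨x, hx⟩, -, hxg₂⟩
    exact hx hxg₂
  exact ⟨_, hp.map _, hg₂⟩

def IsMaximalMPSet (G : SimpleGraph V) (S : Set V) : Prop :=
  G.IsMPSet S ∧ ∀ T : Set V, G.IsMPSet T → S ⊆ T → T = S

theorem lowerMpNum_eq_sInf :
    G.lowerMpNum = sInf {n | ∃ S, G.IsMaximalMPSet S ∧ S.ncard = n} :=
  rfl

def OnMonophonicPath (G : SimpleGraph V) (x y z : V) : Prop :=
  ∃ (u v : V) (p : G.Walk u v), p.IsMonophonic ∧ x ∈ p.support ∧ y ∈ p.support ∧ z ∈ p.support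

theorem OnMonophonicPath.map (f : G ↪g G') {x y z : V}
    (h : G.OnMonophonicPath x y z) : G'.OnMonophonicPath (f x) (f y) (f z) := by
  obtain ⟨u, v, p, hp, hx, hy, hz⟩ := h
  refine ⟨_, _, p.map f.toHom, hp.map f, ?_, ?_, ?_⟩ <;>
    exact Walk.support_map .. ▸ List.mem_map_of_mem ‹_›

theorem isMPSet_of_ncard_le_two {S : Set V} (hS : S.Finite) (hcard : S.ncard ≤ 2) :
    G.IsMPSet S := fun _ _ _ _ =>
  (Set.ncard_le_ncard (Set.sep_subset _ _) hS).trans hcard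

theorem IsMaximalMPSet.two_le_ncard [Finite V] [Nontrivial V] {S : Set V}
    (hS : G.IsMaximalMPSet S) : 2 ≤ S.ncard := by
  by_contra! hlt
  obtain ⟨v, hv⟩ : ∃ v, v ∉ S := by
    by_contra! hall
    rw [Set.eq_univ_of_forall hall, Set.ncard_univ] at hlt
    have := Finite.one_lt_card (α := V)
    omega
  have hins : G.IsMPSet (insert v S) :=
    isMPSet_of_ncard_le_two (Set.toFinite _) ((Set.ncard_insert_le v S).trans (by omega))
  exact hv (hS.2 _ hins (Set.subset_insert v S) ▸ Set.mem_insert v S)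

theorem isMaximalMPSet_pair {x y : V} (hxy : x ≠ y)
    (h : ∀ z, z ≠ x → z ≠ y → G.OnMonophonicPath x y z) : G.IsMaximalMPSet {x, y} := by
  refine ⟨isMPSet_of_ncard_le_two (Set.toFinite _) (Set.ncard_pair hxy).le, fun T hT hxyT => ?_⟩
  refine (Set.Subset.antisymm (fun z hzT => ?_) hxyT)
  by_contra hzxy
  simp only [Set.mem_insert_iff, Set.mem_singleton_iff, not_or] at hzxy
  obtain ⟨u, v, p, hp, hx, hy, hz⟩ := h z hzxy.1 hzxy.2
  have hsub : ({x, y, z} : Set V) ⊆ {w ∈ T | w ∈ p.support} := by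
    rintro w (rfl | rfl | rfl)
    · exact ⟨hxyT (by simp), hx⟩
    · exact ⟨hxyT (by simp), hy⟩
    · exact ⟨hzT, hz⟩
  have := Set.ncard_le_ncard hsub (p.support.finite_toSet.subset fun w hw => hw.2)
  rw [Set.ncard_eq_three.2 ⟨x, y, z, hxy, Ne.symm hzxy.1, Ne.symm hzxy.2, rfl⟩] at this
  exact absurd (hT p hp) (by omega)

theorem lowerMpNum_eq_two [Finite V] {x y : V} (hxy : x ≠ y)
    (h : ∀ z, z ≠ x → z ≠ y → G.OnMonophonicPath x y z) : G.lowerMpNum = 2 := by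
  have : Nontrivial V := ⟨⟨x, y, hxy⟩⟩
  have hpair : 2 ∈ {n | ∃ S, G.IsMaximalMPSet S ∧ S.ncard = n} :=
    ⟨_, isMaximalMPSet_pair hxy h, Set.ncard_pair hxy⟩
  rw [lowerMpNum_eq_sInf]
  obtain ⟨S, hS, hcard⟩ := Nat.sInf_mem ⟨2, hpair⟩
  exact le_antisymm (Nat.sInf_le hpair) (hcard ▸ hS.two_le_ncard)

end

section BoxProd

variable {α β : Type*} {G : SimpleGraph α} {H : SimpleGraph β} {g₁ g₂ : α} {h₁ h₂ : β}

namespace Walk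

@[simp]
theorem mem_support_boxProdLeft {a c : α} {b : β} {p : G.Walk a c} {w : α × β} :
    w ∈ (p.boxProdLeft H b).support ↔ w.1 ∈ p.support ∧ w.2 = b := by
  change w ∈ (p.map (G.boxProdLeft H b).toHom).support ↔ _
  rw [support_map, List.mem_map]
  constructor
  · rintro ⟨x, hx, rfl⟩
    exact ⟨hx, rfl⟩
  · rintro ⟨hw, rfl⟩
    exact ⟨w.1, hw, rfl⟩

@[simp]
theorem mem_support_boxProdRight {a : α} {b d : β} {q : H.Walk b d} {w : α × β} :
    w ∈ (q.boxProdRight G a).support ↔ w.1 = a ∧ w.2 ∈ q.support := by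
  change w ∈ (q.map (G.boxProdRight H a).toHom).support ↔ _
  rw [support_map, List.mem_map]
  constructor
  · rintro ⟨x, hx, rfl⟩
    exact ⟨rfl, hx⟩
  · rintro ⟨rfl, hw⟩
    exact ⟨w.2, hw, rfl⟩

theorem IsMonophonic.boxProdLeft {a c : α} {p : G.Walk a c} (hp : p.IsMonophonic) (b : β) :
    (p.boxProdLeft H b).IsMonophonic :=
  hp.map _

theorem IsMonophonic.boxProdRight {b d : β} {q : H.Walk b d} (hq : q.IsMonophonic) (a : α) :
    (q.boxProdRight G a).IsMonophonic :=
  hq.map _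

theorem IsMonophonic.boxProdLeft_append_boxProdRight {a c : α} {b d : β} {p : G.Walk a c}
    {q : H.Walk b d} (hp : p.IsMonophonic) (hq : q.IsMonophonic) :
    ((p.boxProdLeft H b).append (q.boxProdRight G c)).IsMonophonic := by
  refine (hp.boxProdLeft b).append (hq.boxProdRight c) ?_ ?_
  · intro x hx hx'
    simp only [mem_support_boxProdLeft, mem_support_boxProdRight] at hx hx'
    exact Prod.ext hx'.1 hx.2
  · rintro ⟨x₁, x₂⟩ hx ⟨y₁, y₂⟩ hy hxy
    simp only [mem_support_boxProdLeft, mem_support_boxProdRight] at hx hy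
    obtain ⟨-, rfl⟩ := hx
    obtain ⟨rfl, -⟩ := hy
    rcases boxProd_adj.mp hxy with ⟨-, h⟩ | ⟨-, h⟩
    · exact .inr (Prod.ext rfl h.symm)
    · exact .inl (Prod.ext h rfl)

@[simp, grind =]
theorem mem_support_boxProdLeft_append_boxProdRight {a c : α} {b d : β} {p : G.Walk a c}
    {q : H.Walk b d} {w : α × β} :
    w ∈ ((p.boxProdLeft H b).append (q.boxProdRight G c)).support ↔
      w.1 ∈ p.support ∧ w.2 = b ∨ w.1 = c ∧ w.2 ∈ q.support := by
  rw [mem_support_append_iff, mem_support_boxProdLeft, mem_support_boxProdRight]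

end Walk

open Walk

theorem onMonophonicPath_boxProd_of_ne {a : α} {b : β} (hg : G.Adj g₁ g₂) (hh : H.Adj h₁ h₂)
    {P : G.Walk a g₁} (hP : P.IsMonophonic) (hg₂P : g₂ ∉ P.support)
    {Q : H.Walk b h₁} (hQ : Q.IsMonophonic) (hh₂Q : h₂ ∉ Q.support) (ha : a ≠ g₁) :
    (G □ H).OnMonophonicPath (g₁, h₁) (g₂, h₂) (a, b) := by
  have e₁ : (G □ H).Adj (g₁, h₂) (g₁, h₁) := boxProd_adj_right.2 hh.symm
  have e₂ : (G □ H).Adj (g₂, h₂) (g₁, h₂) := boxProd_adj_left.2 hg.symm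
  -- `(g₂, h₂), (g₁, h₂), (g₁, h₁)`, along row `h₁` to `(a, h₁)`, along column `a` to `(a, b)`
  have hW :=
    ((hP.reverse.boxProdLeft_append_boxProdRight hQ.reverse).cons e₁ ?_ ?_).cons e₂ ?_ ?_
  · exact ⟨_, _, _, hW, by simp, by simp, by simp⟩
  all_goals grind [boxProd_adj, Adj.ne, support_reverse, start_mem_support]

theorem onMonophonicPath_boxProd_of_fst_eq {b : β} (hg : G.Adj g₁ g₂) (hh : H.Adj h₁ h₂)
    {Q : H.Walk b h₁} (hQ : Q.IsMonophonic) (hh₂Q : h₂ ∉ Q.support) :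
    (G □ H).OnMonophonicPath (g₁, h₁) (g₂, h₂) (g₂, b) := by
  have hb : b ≠ h₂ := fun h => hh₂Q (h ▸ Q.start_mem_support)
  have hrow := hg.symm.isMonophonic_toWalk
  by_cases hb₁ : b = h₁
  · -- `(g₁, h₁), (g₂, h₁), (g₂, h₂)`
    subst hb₁
    exact ⟨_, _, _, hg.isMonophonic_toWalk.boxProdLeft_append_boxProdRight
      hh.isMonophonic_toWalk, by simp, by simp, by simp⟩
  by_cases hbh₂ : H.Adj b h₂
  · -- `(g₂, h₂), (g₂, b), (g₁, b)`, along column `g₁` to `(g₁, h₁)`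
    have hW :=
      (hrow.boxProdLeft_append_boxProdRight hQ).cons (boxProd_adj_right.2 hbh₂.symm) ?_ ?_
    · exact ⟨_, _, _, hW, by simp, by simp, by simp⟩
    all_goals grind [boxProd_adj, Adj.ne, Adj.support_toWalk, support_concat]
  by_cases hbh₁ : H.Adj b h₁
  · -- `(g₂, b), (g₁, b), (g₁, h₁), (g₁, h₂), (g₂, h₂)`
    have hW := ((hrow.boxProdLeft_append_boxProdRight hbh₁.isMonophonic_toWalk).concat
      (boxProd_adj_right.2 hh) ?_ ?_).concat (boxProd_adj_left.2 hg) ?_ ?_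
    · exact ⟨_, _, _, hW, by simp, by simp, by simp⟩
    all_goals grind [boxProd_adj, Adj.ne, Adj.support_toWalk, support_concat]
  · -- `(g₂, b), (g₁, b)`, along column `g₁` to `(g₁, h₁)`, then `(g₂, h₁), (g₂, h₂)`
    have hW := ((hrow.boxProdLeft_append_boxProdRight hQ).concat
      (boxProd_adj_left.2 hg) ?_ ?_).concat (boxProd_adj_right.2 hh) ?_ ?_
    · exact ⟨_, _, _, hW, by simp, by simp, by simp⟩
    all_goals grind [boxProd_adj, Adj.ne, Adj.support_toWalk, support_concat]

theorem onMonophonicPath_boxProd_of_fst_ne_of_snd_ne {a : α} {b : β} (hg : G.Adj g₁ g₂)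
    (hh : H.Adj h₁ h₂)
    (hG : ∀ a, a ≠ g₂ → ∃ p : G.Walk a g₁, p.IsMonophonic ∧ g₂ ∉ p.support)
    (hH : ∀ b, b ≠ h₂ → ∃ q : H.Walk b h₁, q.IsMonophonic ∧ h₂ ∉ q.support)
    (ha : a ≠ g₁) (hb : b ≠ h₂) : (G □ H).OnMonophonicPath (g₁, h₁) (g₂, h₂) (a, b) := by
  obtain ⟨Q, hQ, hh₂Q⟩ := hH b hb
  by_cases ha₂ : a = g₂
  · subst ha₂
    exact onMonophonicPath_boxProd_of_fst_eq hg hh hQ hh₂Q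
  · obtain ⟨P, hP, hg₂P⟩ := hG a ha₂
    exact onMonophonicPath_boxProd_of_ne hg hh hP hg₂P hQ hh₂Q ha

theorem onMonophonicPath_boxProd (hg : G.Adj g₁ g₂) (hh : H.Adj h₁ h₂)
    (hG : ∀ a, a ≠ g₂ → ∃ p : G.Walk a g₁, p.IsMonophonic ∧ g₂ ∉ p.support)
    (hH : ∀ b, b ≠ h₂ → ∃ q : H.Walk b h₁, q.IsMonophonic ∧ h₂ ∉ q.support)
    {z : α × β} (hzx : z ≠ (g₁, h₁)) (hzy : z ≠ (g₂, h₂)) :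
    (G □ H).OnMonophonicPath (g₁, h₁) (g₂, h₂) z := by
  obtain ⟨a, b⟩ := z
  by_cases h : a ≠ g₁ ∧ b ≠ h₂
  · exact onMonophonicPath_boxProd_of_fst_ne_of_snd_ne hg hh hG hH h.1 h.2
  -- otherwise swap the factors: then `a ≠ g₂` and `b ≠ h₁`
  have hb : b ≠ h₁ := by grind [Adj.ne]
  have ha : a ≠ g₂ := by grind [Adj.ne]
  exact (onMonophonicPath_boxProd_of_fst_ne_of_snd_ne hh hg hH hG hb ha).map
    (boxProdComm H G).toEmbedding

end BoxProd

end SimpleGraph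

/-- If `G` and `H` are finite connected graphs with at least two vertices
each, then `mp⁻(G □ H) = 2`. -/
theorem lowerMpNum_boxProd {α β : Type*} [Fintype α] [Fintype β]
    (G : SimpleGraph α) (H : SimpleGraph β) (hG : G.Connected) (hH : H.Connected)
    (hcardG : 2 ≤ Fintype.card α) (hcardH : 2 ≤ Fintype.card β) :
    (G □ H).lowerMpNum = 2 := by
  have : Nontrivial α := Fintype.one_lt_card_iff_nontrivial.mp hcardG
  have : Nontrivial β := Fintype.one_lt_card_iff_nontrivial.mp hcardH
  obtain ⟨g₁, g₂, hg, hPG⟩ := hG.exists_adj_forall_exists_isMonophonic_notMem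
  obtain ⟨h₁, h₂, hh, hPH⟩ := hH.exists_adj_forall_exists_isMonophonic_notMem
  exact lowerMpNum_eq_two (x := (g₁, h₁)) (y := (g₂, h₂)) (by simp [hg.ne])
    fun _ hzx hzy => onMonophonicPath_boxProd hg hh hPG hPH hzx hzy
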